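/- Let R be an eDCTRS. Then: (1) R is U_opt-NE if and only if (R)^{-1} is a 3-eDCTRS; (2) if R is U_opt-NE, then (a) U_opt((R)^{-1}) = (U_opt(R))^{-1} up to renaming of U symbols (namely under the identification U^ρ_i = U^{(ρ)^{-1}}_{k−i+1} for each rule ρ with k conditions and 1 ≤ i ≤ k), (b) R is U_opt-LL if and only if (R)^{-1} is U_opt-RL, and (c) R is U_opt-RL if and only if (R)^{-1} is U_opt-LL; (3) R is non-LV if and only if (R)^{-1} is non-RV; (4) R is non-RV if and only if (R)^{-1} is non-LV. -/

import Mathlib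

set_option maxHeartbeats 1000000

universe u

/-! ## Terms -/

inductive Term (α : Type u) : Type u where
  | var : ℕ → Term α
  | app : α → List (Term α) → Term α

namespace Term

variable {α : Type u}

/-- The list of variable occurrences of a term (left-to-right). -/
def varList : Term α → List ℕ
  | var x => [x]
  | app _ ts => ts.attach.foldr (fun t acc => varList t.1 ++ acc) []
decreasing_by
  simp only [Term.app.sizeOf_spec]
  have := List.sizeOf_lt_of_mem t.2
  omega

/-- The list of (function symbol, number of arguments) occurrences of a term. -/
def apps : Term α → List (α × ℕ)
  | var _ => []
  | app f ts => (f, ts.length) :: ts.attach.foldr (fun t acc => apps t.1 ++ acc) []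
decreasing_by
  simp only [Term.app.sizeOf_spec]
  have := List.sizeOf_lt_of_mem t.2
  omega

/-- `Var(t)`: the set of variables of a term. -/
def varFinset (t : Term α) : Finset ℕ := t.varList.toFinset

/-- All function symbols of the term belong to the signature `F`. -/
def overSig (F : Set α) (t : Term α) : Prop := ∀ p ∈ t.apps, p.1 ∈ F

/-- `t ∈ T(F,V)`: all function symbols belong to `F` and are applied
according to their arities. -/
def inT (F : Set α) (ar : α → ℕ) (t : Term α) : Prop :=
  ∀ p ∈ t.apps, p.1 ∈ F ∧ ar p.1 = p.2

/-- A term is linear if no variable occurs twice in it. -/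
def Linear (t : Term α) : Prop := t.varList.Nodup

/-- A term is ground if it contains no variable. -/
def Ground (t : Term α) : Prop := t.varList = []

/-- Applying a substitution to a term. -/
def subst (σ : ℕ → Term α) : Term α → Term α
  | var x => σ x
  | app f ts => app f (ts.attach.map (fun t => subst σ t.1))
decreasing_by
  simp only [Term.app.sizeOf_spec]
  have := List.sizeOf_lt_of_mem t.2
  omega

def isVar : Term α → Prop
  | var _ => True
  | app _ _ => False

def root? : Term α → Option α
  | var _ => none
  | app f _ => some f

def args : Term α → List (Term α)
  | var _ => []
  | app _ ts => ts

end Term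

def junkPair {α : Type u} : Term α × Term α := (Term.var 0, Term.var 0)

/-! ## Conditional rewrite rules -/

/-- An extended (oriented) conditional rewrite rule `l → r ⇐ s₁ ↠ t₁; …; s_k ↠ t_k`,
where `conds` is the list of pairs `(sᵢ, tᵢ)`. -/
structure ERule (α : Type u) : Type u where
  lhs : Term α
  rhs : Term α
  conds : List (Term α × Term α)

namespace ERule

variable {α : Type u}

def nonLV (ρ : ERule α) : Prop := ¬ ρ.lhs.isVar
def nonRV (ρ : ERule α) : Prop := ¬ ρ.rhs.isVar

/-- `X_{j+1} = Var(l, t_1, …, t_j)` (0-based index `j`). -/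
def Xset (ρ : ERule α) (j : ℕ) : Finset ℕ :=
  ρ.lhs.varFinset ∪ ((ρ.conds.take j).map (fun c => c.2.varFinset)).foldr (· ∪ ·) ∅

/-- `Y_{j+1} = Var(r, t_{j+1}, s_{j+2}, t_{j+2}, …, s_k, t_k)` (0-based index `j`). -/
def Yset (ρ : ERule α) (j : ℕ) : Finset ℕ :=
  ρ.rhs.varFinset ∪ (ρ.conds.getD j junkPair).2.varFinset ∪
    ((ρ.conds.drop (j+1)).map (fun c => c.1.varFinset ∪ c.2.varFinset)).foldr (· ∪ ·) ∅

/-- `Z_i = X_i ∩ Y_i`. -/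
def Zset (ρ : ERule α) (j : ℕ) : Finset ℕ := ρ.Xset j ∩ ρ.Yset j

/-- Determinism: `Var(sᵢ) ⊆ Var(l, t₁, …, t_{i-1})`. -/
def Det (ρ : ERule α) : Prop :=
  ∀ j < ρ.conds.length, (ρ.conds.getD j junkPair).1.varFinset ⊆ ρ.Xset j

/-- Type 3: `Var(r) ⊆ Var(l, s₁, t₁, …, s_k, t_k)`. -/
def Type3 (ρ : ERule α) : Prop :=
  ρ.rhs.varFinset ⊆
    ρ.lhs.varFinset ∪ ((ρ.conds.map (fun c => c.1.varFinset ∪ c.2.varFinset)).foldr (· ∪ ·) ∅)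

/-- Left-linearity of a rule. -/
def LL (ρ : ERule α) : Prop := ρ.lhs.Linear
/-- Right-linearity of a rule. -/
def RL (ρ : ERule α) : Prop := ρ.rhs.Linear
/-- Non-erasingness of a rule: `Var(l) ⊆ Var(r)`. -/
def NE (ρ : ERule α) : Prop := ρ.lhs.varFinset ⊆ ρ.rhs.varFinset

/-- `EVar(l → r) = Var(r) \\ Var(l)`, the extra variables of a rule. -/
def extraVars (ρ : ERule α) : Finset ℕ := ρ.rhs.varFinset \ ρ.lhs.varFinset

/-- The inverted rule `(l → r ⇐ s₁ ↠ t₁; …; s_k ↠ t_k)⁻¹ = r → l ⇐ t_k ↠ s_k; …; t₁ ↠ s₁`. -/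
def inv (ρ : ERule α) : ERule α :=
  ⟨ρ.rhs, ρ.lhs, (ρ.conds.map (fun c => (c.2, c.1))).reverse⟩

def allVarFinset (ρ : ERule α) : Finset ℕ :=
  ρ.lhs.varFinset ∪ ρ.rhs.varFinset ∪
    ((ρ.conds.map (fun c => c.1.varFinset ∪ c.2.varFinset)).foldr (· ∪ ·) ∅)

/-- A number strictly larger than every variable of the rule; used to pick fresh variables. -/
def freshBase (ρ : ERule α) : ℕ := ρ.allVarFinset.sup id + 1

/-- All terms of the rule use only symbols of `F`. -/
def overSig (F : Set α) (ρ : ERule α) : Prop :=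
  ρ.lhs.overSig F ∧ ρ.rhs.overSig F ∧ ∀ c ∈ ρ.conds, c.1.overSig F ∧ c.2.overSig F

/-- All terms of the rule are in `T(F,V)` (symbols of `F`, arity-correct). -/
def inT (F : Set α) (ar : α → ℕ) (ρ : ERule α) : Prop :=
  ρ.lhs.inT F ar ∧ ρ.rhs.inT F ar ∧ ∀ c ∈ ρ.conds, c.1.inT F ar ∧ c.2.inT F ar

end ERule

/-! ## Reduction relations -/

/-- One-hole contexts. -/
inductive Ctx (α : Type u) : Type u where
  | hole : Ctx α
  | app : α → List (Term α) → Ctx α → List (Term α) → Ctx α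

def Ctx.plug {α : Type u} : Ctx α → Term α → Term α
  | .hole, t => t
  | .app f pre c post, t => .app f (pre ++ c.plug t :: post)

/-- The approximations `→_{(n),R}` of the reduction relation of an oriented eCTRS. -/
def RedN {α : Type u} (R : Set (ERule α)) : ℕ → Term α → Term α → Prop
  | 0 => fun _ _ => False
  | n + 1 => fun s t =>
      RedN R n s t ∨
      ∃ ρ ∈ R, ∃ C : Ctx α, ∃ σ : ℕ → Term α,
        s = C.plug (ρ.lhs.subst σ) ∧ t = C.plug (ρ.rhs.subst σ) ∧
        ∀ c ∈ ρ.conds, Relation.ReflTransGen (RedN R n) (c.1.subst σ) (c.2.subst σ)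

/-- The reduction relation `→_R` of an oriented eCTRS. -/
def Red {α : Type u} (R : Set (ERule α)) (s t : Term α) : Prop := ∃ n, RedN R n s t

/-- `→*_R`. -/
def RedStar {α : Type u} (R : Set (ERule α)) : Term α → Term α → Prop :=
  Relation.ReflTransGen (Red R)

/-- The approximations of the reduction relation of a join CTRS
(conditions interpreted as joinability). -/
def JRedN {α : Type u} (R : Set (ERule α)) : ℕ → Term α → Term α → Prop
  | 0 => fun _ _ => False
  | n + 1 => fun s t =>
      JRedN R n s t ∨
      ∃ ρ ∈ R, ∃ C : Ctx α, ∃ σ : ℕ → Term α,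
        s = C.plug (ρ.lhs.subst σ) ∧ t = C.plug (ρ.rhs.subst σ) ∧
        ∀ c ∈ ρ.conds, ∃ w, Relation.ReflTransGen (JRedN R n) (c.1.subst σ) w ∧
          Relation.ReflTransGen (JRedN R n) (c.2.subst σ) w

/-- The reduction relation of a join CTRS. -/
def JRed {α : Type u} (R : Set (ERule α)) (s t : Term α) : Prop := ∃ n, JRedN R n s t

def JRedStar {α : Type u} (R : Set (ERule α)) : Term α → Term α → Prop :=
  Relation.ReflTransGen (JRed R)

/-- The underlying unconditional system `R_u`. -/
def Ru {α : Type u} (R : Set (ERule α)) : Set (ERule α) :=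
  (fun ρ : ERule α => ⟨ρ.lhs, ρ.rhs, []⟩) '' R

/-- Normal form w.r.t. a system. -/
def IsNF {α : Type u} (R : Set (ERule α)) (t : Term α) : Prop := ∀ w, ¬ Red R t w

/-! ## Unravelings for deterministic CTRSs -/

/-- The fixed-order sequence of a finite set of variables. -/
def seqOf (s : Finset ℕ) : List ℕ := s.sort (· ≤ ·)

/-- `U(t, x⃗)`: a U symbol applied to a term followed by a sequence of variables. -/
def mkU {α : Type u} (f : α) (t : Term α) (xs : List ℕ) : Term α :=
  .app f (t :: xs.map Term.var)

/-- Generic sequential unraveling of a single deterministic rule, where `carry j` is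
the variable sequence carried by the `j`-th U symbol. -/
def unravelWith {α : Type u} (carry : ℕ → List ℕ) (u : ℕ → α) (ρ : ERule α) :
    List (ERule α) :=
  (List.range (ρ.conds.length + 1)).map (fun j =>
    ⟨ if j = 0 then ρ.lhs else mkU (u (j-1)) (ρ.conds.getD (j-1) junkPair).2 (carry (j-1)),
      if j < ρ.conds.length then mkU (u j) (ρ.conds.getD j junkPair).1 (carry j) else ρ.rhs,
      [] ⟩)

/-- Ohlebusch's unraveling `U` of a single rule (carrying `X⃗ᵢ`). -/
def unravelU {α : Type u} (u : ℕ → α) (ρ : ERule α) : List (ERule α) :=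
  unravelWith (fun j => seqOf (ρ.Xset j)) u ρ

/-- The optimized unraveling `U_opt` of a single rule (carrying `Z⃗ᵢ`). -/
def unravelOpt {α : Type u} (u : ℕ → α) (ρ : ERule α) : List (ERule α) :=
  unravelWith (fun j => seqOf (ρ.Zset j)) u ρ

/-- `U(R)`. -/
def USys {α : Type u} (u : ERule α → ℕ → α) (R : Set (ERule α)) : Set (ERule α) :=
  { q | ∃ ρ ∈ R, q ∈ unravelU (u ρ) ρ }

/-- `U_opt(R)`. -/
def UoptSys {α : Type u} (u : ERule α → ℕ → α) (R : Set (ERule α)) : Set (ERule α) :=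
  { q | ∃ ρ ∈ R, q ∈ unravelOpt (u ρ) ρ }

/-- The U symbols introduced for the rules of `R`. -/
def USymbols {α : Type u} (u : ERule α → ℕ → α) (R : Set (ERule α)) : Set α :=
  { a | ∃ ρ ∈ R, ∃ i < ρ.conds.length, a = u ρ i }

/-- Freshness of the U symbols: they do not occur in `F` and are pairwise distinct. -/
def UFresh {α : Type u} (F : Set α) (u : ERule α → ℕ → α) (R : Set (ERule α)) : Prop :=
  (∀ ρ ∈ R, ∀ i < ρ.conds.length, u ρ i ∉ F) ∧
  (∀ ρ ∈ R, ∀ ρ' ∈ R, ∀ i < ρ.conds.length, ∀ j < ρ'.conds.length,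
      u ρ i = u ρ' j → ρ = ρ' ∧ i = j)

/-! ## Positions, parallel reduction, EV-safe reduction -/

abbrev Pos := List ℕ

/-- Subterm at a position. -/
def Term.sub? {α : Type u} : Pos → Term α → Option (Term α)
  | [], t => some t
  | _ :: _, .var _ => none
  | i :: p, .app _ ts => (ts[i]?).bind (Term.sub? p)

/-- Replacing the subterm at a position by `w`. -/
def Term.replaceAt {α : Type u} (w : Term α) : Pos → Term α → Term α
  | [], _ => w
  | _ :: _, .var x => .var x
  | i :: p, .app f ts =>
      .app f (ts.mapIdx (fun j s => if j = i then Term.replaceAt w p s else s))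

/-- `Pos_F(t)`: non-variable positions of `t`. -/
def PosF {α : Type u} (t : Term α) : Set Pos :=
  { p | ∃ f ts, Term.sub? p t = some (Term.app f ts) }

/-- `Pos_V(t)`: variable positions of `t`. -/
def PosV {α : Type u} (t : Term α) : Set Pos :=
  { p | ∃ x, Term.sub? p t = some (Term.var x) }

/-- One rewrite step of an eTRS at position `p`. -/
def RedAt {α : Type u} (R : Set (ERule α)) (p : Pos) (s t : Term α) : Prop :=
  ∃ ρ ∈ R, ρ.conds = [] ∧ ∃ σ : ℕ → Term α,
    Term.sub? p s = some (ρ.lhs.subst σ) ∧ t = Term.replaceAt (ρ.rhs.subst σ) p s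

/-- Two positions are parallel. -/
def ParallelPos (p q : Pos) : Prop := ¬ p <+: q ∧ ¬ q <+: p

/-- A sequence of single steps at the listed positions. -/
inductive RedSeqAt {α : Type u} (R : Set (ERule α)) : List Pos → Term α → Term α → Prop
  | nil (t : Term α) : RedSeqAt R [] t t
  | cons {ps s s' t} (p : Pos) : RedAt R p s s' → RedSeqAt R ps s' t →
      RedSeqAt R (p :: ps) s t

/-- One parallel rewrite step contracting the (pairwise parallel) positions in `P`. -/
def ParStep {α : Type u} (R : Set (ERule α)) (P : List Pos) (s t : Term α) : Prop :=
  P.Pairwise ParallelPos ∧ RedSeqAt R P s t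

/-- The parallel reduction `⇉_R`. -/
def ParRed {α : Type u} (R : Set (ERule α)) (s t : Term α) : Prop :=
  ∃ P, ParStep R P s t

/-- Parallel reduction where every contracted position is at or below a position of `Q`. -/
def ParRedBelow {α : Type u} (R : Set (ERule α)) (Q : Set Pos) (s t : Term α) : Prop :=
  ∃ P, ParStep R P s t ∧ ∀ p ∈ P, ∃ q ∈ Q, q <+: p

/-- `n`-fold composition of a relation. -/
def NFold {β : Type*} (r : β → β → Prop) : ℕ → β → β → Prop
  | 0 => Eq
  | n + 1 => fun a c => ∃ b, r a b ∧ NFold r n b c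

/-- The update of the set of basic positions w.r.t. extra variables after a rewrite step
at position `p` with rule `l → r`. -/
def nextB {α : Type u} (B : Set Pos) (p : Pos) (l r : Term α) : Set Pos :=
  { q | q ∈ B ∧ ¬ p <+: q }
  ∪ { q | ∃ q' ∈ PosF r, q = p ++ q' }
  ∪ { q | ∃ pv p' q', pv ∈ PosV l ∧ Term.sub? pv l = Term.sub? p' r ∧
        (p ++ pv ++ q') ∈ B ∧ q = p ++ p' ++ q' }

/-- Reduction sequences of an eTRS based on a set `B` of positions w.r.t. extra
variables, where additionally every term substituted for an extra variable of the
applied rule satisfies `T` (EV-instantiation on `T`). -/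
inductive EVSeq {α : Type u} (R : Set (ERule α)) (T : Term α → Prop) :
    Set Pos → Term α → Term α → Prop
  | refl (B : Set Pos) (t : Term α) : EVSeq R T B t t
  | step {B : Set Pos} {s s' t : Term α} (p : Pos) (ρ : ERule α) (σ : ℕ → Term α) :
      ρ ∈ R → ρ.conds = [] →
      Term.sub? p s = some (ρ.lhs.subst σ) →
      s' = Term.replaceAt (ρ.rhs.subst σ) p s →
      p ∈ B →
      (∀ x ∈ ρ.extraVars, T (σ x)) →
      EVSeq R T (nextB B p ρ.lhs ρ.rhs) s' t →
      EVSeq R T B s t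

/-- An EV-safe reduction sequence `s ↪*_R t`, EV-instantiated on `T`. -/
def EVSafeI {α : Type u} (R : Set (ERule α)) (T : Term α → Prop) (s t : Term α) : Prop :=
  EVSeq R T (PosF s) s t

/-- An EV-safe reduction sequence `s ↪*_R t`. -/
def EVSafe {α : Type u} (R : Set (ERule α)) (s t : Term α) : Prop :=
  EVSeq R (fun _ => True) (PosF s) s t

/-! ## Tree homomorphisms -/

/-- Applying the tree homomorphism determined by `h` to a term:
`φ(f(t₁, …, t_n)) = h(f){xᵢ ↦ φ(tᵢ)}` (the formal variable `xᵢ` is the variable `i - 1`). -/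
def applyHom {α : Type u} (h : α → Term α) : Term α → Term α
  | .var x => .var x
  | .app f ts =>
      Term.subst (fun i => (ts.attach.map (fun s => applyHom h s.1)).getD i (Term.var i)) (h f)
decreasing_by
  simp only [Term.app.sizeOf_spec]
  have := List.sizeOf_lt_of_mem s.2
  omega

/-- The image of a rule under a tree homomorphism. -/
def homRule {α : Type u} (h : α → Term α) (ρ : ERule α) : ERule α :=
  ⟨applyHom h ρ.lhs, applyHom h ρ.rhs,
    ρ.conds.map (fun c => (applyHom h c.1, applyHom h c.2))⟩

/-- The image of an eCTRS under a tree homomorphism. -/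
def homSys {α : Type u} (h : α → Term α) (R : Set (ERule α)) : Set (ERule α) :=
  homRule h '' R

/-- `h` determines a tree homomorphism from `T(G₁,V)` to `T(G₂,V)` (w.r.t. arity `ar`):
for `f ∈ G₁` of arity `n`, `h f` is a term over `G₂` with variables among `x₁, …, x_n`. -/
def TreeHom {α : Type u} (ar : α → ℕ) (G₁ G₂ : Set α) (h : α → Term α) : Prop :=
  ∀ f ∈ G₁, (h f).overSig G₂ ∧ ∀ x ∈ (h f).varList, x < ar f

/-- `F`-identical tree homomorphism. -/
def FIdentical {α : Type u} (ar : α → ℕ) (F : Set α) (h : α → Term α) : Prop :=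
  ∀ f ∈ F, h f = Term.app f ((List.range (ar f)).map Term.var)

/-- Non-erasing tree homomorphism (on the signature `G`). -/
def HomNonErasing {α : Type u} (ar : α → ℕ) (G : Set α) (h : α → Term α) : Prop :=
  ∀ f ∈ G, (h f).varFinset = Finset.range (ar f)

/-- The homomorphism is EV-preserving for the eTRS `S`. -/
def EVPreserving {α : Type u} (h : α → Term α) (S : Set (ERule α)) : Prop :=
  ∀ ρ ∈ S, (homRule h ρ).extraVars = ρ.extraVars

/-! ## Unravelings for join and normal CTRSs, and `Norm` -/

/-- Marchiori-style unraveling `U_J` of a join conditional rule. -/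
def unravelJ {α : Type u} (uj : ERule α → α) (ρ : ERule α) : List (ERule α) :=
  if ρ.conds.isEmpty then [ρ]
  else
    [ ⟨ρ.lhs,
        Term.app (uj ρ) ((ρ.conds.foldr (fun c acc => c.1 :: c.2 :: acc) []) ++
          (seqOf ρ.lhs.varFinset).map Term.var), []⟩,
      ⟨Term.app (uj ρ)
          (((List.range ρ.conds.length).foldr
              (fun j acc => Term.var (ρ.freshBase + j) :: Term.var (ρ.freshBase + j) :: acc) []) ++
            (seqOf ρ.lhs.varFinset).map Term.var),
        ρ.rhs, []⟩ ]

def UJSys {α : Type u} (uj : ERule α → α) (R : Set (ERule α)) : Set (ERule α) :=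
  { q | ∃ ρ ∈ R, q ∈ unravelJ uj ρ }

/-- Unraveling `U_N` of a normal conditional rule. -/
def unravelN {α : Type u} (un : ERule α → α) (ρ : ERule α) : List (ERule α) :=
  if ρ.conds.isEmpty then [ρ]
  else
    [ ⟨ρ.lhs,
        Term.app (un ρ) (ρ.conds.map Prod.fst ++ (seqOf ρ.lhs.varFinset).map Term.var), []⟩,
      ⟨Term.app (un ρ) (ρ.conds.map Prod.snd ++ (seqOf ρ.lhs.varFinset).map Term.var),
        ρ.rhs, []⟩ ]

def UNSys {α : Type u} (un : ERule α → α) (R : Set (ERule α)) : Set (ERule α) :=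
  { q | ∃ ρ ∈ R, q ∈ unravelN un ρ }

/-- `Norm` on rules: `l → r ⇐ eq(s₁,t₁) ↠ eq(⊤,⊤); …; eq(s_k,t_k) ↠ eq(⊤,⊤)`. -/
def normRule {α : Type u} (eqS topS : α) (ρ : ERule α) : ERule α :=
  ⟨ρ.lhs, ρ.rhs,
    ρ.conds.map (fun c =>
      (Term.app eqS [c.1, c.2], Term.app eqS [Term.app topS [], Term.app topS []]))⟩

/-- `Norm(R) = {eq(x,x) → eq(⊤,⊤)} ∪ {Norm(ρ) | ρ ∈ R}`. -/
def NormSys {α : Type u} (eqS topS : α) (R : Set (ERule α)) : Set (ERule α) :=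
  insert
    ⟨Term.app eqS [Term.var 0, Term.var 0],
      Term.app eqS [Term.app topS [], Term.app topS []], []⟩
    (normRule eqS topS '' R)

/-- A normal CTRS: a deterministic, non-LV CTRS all of whose condition right-hand
sides are ground normal forms w.r.t. `R_u`. -/
def NormalCTRS {α : Type u} (R : Set (ERule α)) : Prop :=
  ∀ ρ ∈ R, ρ.Det ∧ ρ.nonLV ∧ ∀ c ∈ ρ.conds, c.2.Ground ∧ IsNF (Ru R) c.2

/-! Inversion exchanges the roles of `Xᵢ` (variables already bound) and `Yᵢ` (variables still
needed): when `ρ` is deterministic, the `Y`-sets of `ρ⁻¹` are the `X`-sets of `ρ` in reverse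
order, since each `Var(sⱼ)` already lies in `Xⱼ`. So if both `ρ` and `ρ⁻¹` are deterministic,
their `Z`-sets agree up to reversal, and the unraveled rules of `ρ⁻¹` are those of `ρ`, inverted
and read backwards.

Non-erasingness of the rules `Uᵢ(tᵢ, Z⃗ᵢ) → Uᵢ₊₁(sᵢ₊₁, Z⃗ᵢ₊₁)` and `U_k(t_k, Z⃗_k) → r`
propagates backwards from `r` along the chain of U symbols, and amounts to
`Var(tᵢ) ⊆ Var(r, sᵢ₊₁, …, s_k)`, i.e. to determinism of `ρ⁻¹`; non-erasingness of the first
rule `l → U₁(s₁, Z⃗₁)` amounts to `ρ⁻¹` being of Type 3. -/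

theorem List.mem_foldr_union_map {β : Type*} {l : List β} {f : β → Finset ℕ} {x : ℕ} :
    x ∈ (l.map f).foldr (· ∪ ·) ∅ ↔ ∃ c ∈ l, x ∈ f c := by
  induction l with
  | nil => simp
  | cons a l ih => simp [ih]

theorem List.mem_foldr_union_map_getD {β : Type*} {l : List β} {f : β → Finset ℕ} (d : β)
    {x : ℕ} : x ∈ (l.map f).foldr (· ∪ ·) ∅ ↔ ∃ i < l.length, x ∈ f (l.getD i d) := by
  rw [List.mem_foldr_union_map, List.exists_mem_iff_getElem]
  exact exists_congr fun i => ⟨fun ⟨hi, hx⟩ => ⟨hi, by rwa [List.getD_eq_getElem _ _ hi]⟩,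
    fun ⟨hi, hx⟩ => ⟨hi, by rwa [List.getD_eq_getElem _ _ hi] at hx⟩⟩

namespace ERule

variable {α : Type u} (ρ : ERule α)

-- `Var(s_{i+1})` and `Var(t_{i+1})`: indices are 0-based, as in `Xset` and `Yset`.
def sVars (i : ℕ) : Finset ℕ := (ρ.conds.getD i junkPair).1.varFinset

def tVars (i : ℕ) : Finset ℕ := (ρ.conds.getD i junkPair).2.varFinset

def condsVars : Finset ℕ :=
  (ρ.conds.map fun c => c.1.varFinset ∪ c.2.varFinset).foldr (· ∪ ·) ∅

variable {ρ} {x : ℕ}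

theorem mem_Xset {j : ℕ} :
    x ∈ ρ.Xset j ↔ x ∈ ρ.lhs.varFinset ∨ ∃ i < j, i < ρ.conds.length ∧ x ∈ ρ.tVars i := by
  rw [Xset, Finset.mem_union, List.mem_foldr_union_map_getD junkPair, List.length_take]
  refine or_congr_right (exists_congr fun i => ?_)
  by_cases hij : i < j
  · simp [hij, tVars, List.getD_eq_getElem?_getD]
  · simp [hij]

theorem mem_Yset {j : ℕ} :
    x ∈ ρ.Yset j ↔ x ∈ ρ.rhs.varFinset ∨ x ∈ ρ.tVars j ∨
      ∃ i, j < i ∧ i < ρ.conds.length ∧ (x ∈ ρ.sVars i ∨ x ∈ ρ.tVars i) := by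
  rw [Yset, Finset.mem_union, Finset.mem_union, List.mem_foldr_union_map_getD junkPair,
    List.length_drop, or_assoc]
  refine or_congr_right (or_congr_right ⟨?_, ?_⟩)
  · rintro ⟨i, hi, hx⟩
    refine ⟨j + 1 + i, by omega, by omega, ?_⟩
    simpa [sVars, tVars, List.getD_eq_getElem?_getD, List.getElem?_drop] using hx
  · rintro ⟨i, hji, hik, hx⟩
    refine ⟨i - (j + 1), by omega, ?_⟩
    simpa [sVars, tVars, List.getD_eq_getElem?_getD, List.getElem?_drop,
      Nat.add_sub_cancel' (show j + 1 ≤ i by omega)] using hx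

theorem mem_condsVars :
    x ∈ ρ.condsVars ↔ ∃ i < ρ.conds.length, x ∈ ρ.sVars i ∨ x ∈ ρ.tVars i := by
  simp only [condsVars, List.mem_foldr_union_map_getD junkPair, Finset.mem_union, sVars, tVars]

theorem Xset_zero : ρ.Xset 0 = ρ.lhs.varFinset := by
  simp [Xset]

theorem Xset_succ {j : ℕ} (hj : j < ρ.conds.length) :
    ρ.Xset (j + 1) = ρ.Xset j ∪ ρ.tVars j := by
  ext x
  simp only [Finset.mem_union, mem_Xset]
  constructor
  · rintro (h | ⟨i, hij, hik, hx⟩)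
    · exact Or.inl (Or.inl h)
    · rcases Nat.lt_succ_iff_lt_or_eq.mp hij with hij | rfl
      · exact Or.inl (Or.inr ⟨i, hij, hik, hx⟩)
      · exact Or.inr hx
  · rintro ((h | ⟨i, hij, hik, hx⟩) | hx)
    · exact Or.inl h
    · exact Or.inr ⟨i, by omega, hik, hx⟩
    · exact Or.inr ⟨j, by omega, hj, hx⟩

theorem Xset_mono {i j : ℕ} (hij : i ≤ j) : ρ.Xset i ⊆ ρ.Xset j := by
  intro x hx
  rw [mem_Xset] at hx ⊢
  rcases hx with h | ⟨i', hi', hik, hx⟩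
  · exact Or.inl h
  · exact Or.inr ⟨i', by omega, hik, hx⟩

theorem tVars_union_Zset_subset {m : ℕ} (hm : m < ρ.conds.length) :
    ρ.tVars m ∪ ρ.Zset m ⊆ ρ.Xset (m + 1) ∩ ρ.Yset m := by
  rw [Xset_succ hm, Zset]
  intro x hx
  simp only [Finset.mem_union, Finset.mem_inter] at hx ⊢
  have hY : x ∈ ρ.tVars m → x ∈ ρ.Yset m := fun h => mem_Yset.mpr (Or.inr (Or.inl h))
  tauto

theorem sVars_subset_condsVars {i : ℕ} (hi : i < ρ.conds.length) : ρ.sVars i ⊆ ρ.condsVars :=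
  fun _ hx => mem_condsVars.mpr ⟨i, hi, Or.inl hx⟩

theorem Yset_subset_rhs_union_condsVars {j : ℕ} (hj : j < ρ.conds.length) :
    ρ.Yset j ⊆ ρ.rhs.varFinset ∪ ρ.condsVars := by
  intro x hx
  rw [Finset.mem_union, mem_condsVars]
  rcases mem_Yset.mp hx with h | h | ⟨i, -, hik, h⟩
  · exact Or.inl h
  · exact Or.inr ⟨j, hj, Or.inr h⟩
  · exact Or.inr ⟨i, hik, h⟩

theorem rhs_union_condsVars_subset_sVars_union_Yset :
    ρ.rhs.varFinset ∪ ρ.condsVars ⊆ ρ.sVars 0 ∪ ρ.Yset 0 := by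
  intro x hx
  rw [Finset.mem_union, mem_Yset]
  rcases Finset.mem_union.mp hx with h | h
  · exact Or.inr (Or.inl h)
  · obtain ⟨i, hik, h⟩ := mem_condsVars.mp h
    rcases Nat.eq_zero_or_pos i with rfl | hi
    · exact h.imp id fun h => Or.inr (Or.inl h)
    · exact Or.inr (Or.inr (Or.inr ⟨i, hi, hik, h⟩))

theorem inv_inv (ρ : ERule α) : ρ.inv.inv = ρ := by
  simp [inv, List.map_reverse, Function.comp_def]

@[simp]
theorem inv_conds_length (ρ : ERule α) : ρ.inv.conds.length = ρ.conds.length := by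
  simp [inv]

theorem inv_conds_getD {i : ℕ} (hi : i < ρ.conds.length) :
    ρ.inv.conds.getD i junkPair = (ρ.conds.getD (ρ.conds.length - 1 - i) junkPair).swap := by
  rw [List.getD_eq_getElem _ _ (by simpa using hi), List.getD_eq_getElem _ _ (by omega)]
  simp [inv, List.getElem_reverse, Prod.swap]

theorem inv_sVars {i : ℕ} (hi : i < ρ.conds.length) :
    ρ.inv.sVars i = ρ.tVars (ρ.conds.length - 1 - i) := by
  simp only [sVars, tVars, inv_conds_getD hi, Prod.fst_swap]

theorem inv_tVars {i : ℕ} (hi : i < ρ.conds.length) :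
    ρ.inv.tVars i = ρ.sVars (ρ.conds.length - 1 - i) := by
  simp only [sVars, tVars, inv_conds_getD hi, Prod.snd_swap]

theorem inv_LL : ρ.inv.LL ↔ ρ.RL := Iff.rfl

theorem inv_RL : ρ.inv.RL ↔ ρ.LL := Iff.rfl

theorem inv_nonLV : ρ.inv.nonLV ↔ ρ.nonRV := Iff.rfl

theorem inv_nonRV : ρ.inv.nonRV ↔ ρ.nonLV := Iff.rfl

theorem inv_condsVars : ρ.inv.condsVars = ρ.condsVars := by
  ext x
  simp only [condsVars, List.mem_foldr_union_map, inv, List.mem_reverse, List.mem_map]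
  constructor
  · rintro ⟨_, ⟨c, hc, rfl⟩, hx⟩
    exact ⟨c, hc, by rwa [Finset.union_comm]⟩
  · rintro ⟨c, hc, hx⟩
    exact ⟨_, ⟨c, hc, rfl⟩, by rwa [Finset.union_comm]⟩

theorem inv_type3_iff : ρ.inv.Type3 ↔ ρ.lhs.varFinset ⊆ ρ.rhs.varFinset ∪ ρ.condsVars := by
  rw [← inv_condsVars]
  rfl

theorem inv_Xset_zero : ρ.inv.Xset 0 = ρ.rhs.varFinset :=
  Xset_zero

-- `ρ.inv.Xset (k - 1 - m)` is `Var(r) ∪ ⋃_{m < i < k} sVars i`.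
theorem inv_Xset_eq_sVars_union {m : ℕ} (hm : m + 1 < ρ.conds.length) :
    ρ.inv.Xset (ρ.conds.length - 1 - m) =
      ρ.sVars (m + 1) ∪ ρ.inv.Xset (ρ.conds.length - 1 - (m + 1)) := by
  have h := Xset_succ (ρ := ρ.inv) (j := ρ.conds.length - 1 - (m + 1)) (by simp; omega)
  rw [show ρ.conds.length - 1 - (m + 1) + 1 = ρ.conds.length - 1 - m by omega,
    inv_tVars (by omega), show ρ.conds.length - 1 - (ρ.conds.length - 1 - (m + 1)) = m + 1 by
      omega] at h
  rw [h, Finset.union_comm]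

theorem inv_Yset_eq_Xset (hdet : ρ.Det) {j : ℕ} (hj : j < ρ.conds.length) :
    ρ.inv.Yset j = ρ.Xset (ρ.conds.length - 1 - j) := by
  ext x
  rw [mem_Yset, inv_tVars hj]
  constructor
  · rintro (h | h | ⟨i, hji, hik, h | h⟩)
    · exact mem_Xset.mpr (Or.inl h)
    · exact hdet _ (by omega) h
    · rw [inv_sVars (by simpa using hik)] at h
      exact mem_Xset.mpr (Or.inr ⟨_, by simp at hik; omega, by omega, h⟩)
    · rw [inv_tVars (by simpa using hik)] at h
      exact Xset_mono (by omega) (hdet _ (by simp at hik; omega) h)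
  · rw [mem_Xset]
    rintro (h | ⟨i, hi, hik, h⟩)
    · exact Or.inl h
    · refine Or.inr (Or.inr ⟨ρ.conds.length - 1 - i, by omega, by simp; omega, Or.inl ?_⟩)
      rwa [inv_sVars (by omega), show ρ.conds.length - 1 - (ρ.conds.length - 1 - i) = i by
        omega]

theorem Yset_eq_inv_Xset (hdet : ρ.inv.Det) {j : ℕ} (hj : j < ρ.conds.length) :
    ρ.Yset j = ρ.inv.Xset (ρ.conds.length - 1 - j) := by
  simpa [inv_inv] using inv_Yset_eq_Xset hdet (j := j) (by simpa using hj)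

theorem inv_Zset (hdet : ρ.Det) (hdet' : ρ.inv.Det) {j : ℕ} (hj : j < ρ.conds.length) :
    ρ.inv.Zset j = ρ.Zset (ρ.conds.length - 1 - j) := by
  rw [Zset, Zset, inv_Yset_eq_Xset hdet hj, Yset_eq_inv_Xset hdet' (by omega),
    show ρ.conds.length - 1 - (ρ.conds.length - 1 - j) = j by omega, Finset.inter_comm]

end ERule

open ERule

section Unraveling

variable {α : Type u}

def unravelOptRule (u : ℕ → α) (ρ : ERule α) (j : ℕ) : ERule α :=
  ⟨if j = 0 then ρ.lhs
      else mkU (u (j - 1)) (ρ.conds.getD (j - 1) junkPair).2 (seqOf (ρ.Zset (j - 1))),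
    if j < ρ.conds.length then mkU (u j) (ρ.conds.getD j junkPair).1 (seqOf (ρ.Zset j))
      else ρ.rhs,
    []⟩

theorem unravelOpt_eq (u : ℕ → α) (ρ : ERule α) :
    unravelOpt u ρ = (List.range (ρ.conds.length + 1)).map (unravelOptRule u ρ) :=
  rfl

theorem Term.varList_mkU (f : α) (t : Term α) (xs : List ℕ) :
    (mkU f t xs).varList = t.varList ++ xs := by
  rw [mkU, Term.varList, List.foldr_attach (f := fun (s : Term α) acc => s.varList ++ acc)]
  induction xs with
  | nil => rfl
  | cons a xs ih => simpa [Term.varList] using ih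

theorem Term.varFinset_mkU (f : α) (t : Term α) (xs : List ℕ) :
    (mkU f t xs).varFinset = t.varFinset ∪ xs.toFinset := by
  simp [Term.varFinset, Term.varList_mkU, List.toFinset_append]

variable {u u' : ℕ → α} {ρ : ERule α}

theorem NE_unravelOptRule_iff {j : ℕ} :
    (unravelOptRule u ρ j).NE ↔
      (if j = 0 then ρ.lhs.varFinset else ρ.tVars (j - 1) ∪ ρ.Zset (j - 1)) ⊆
        (if j < ρ.conds.length then ρ.sVars j ∪ ρ.Zset j else ρ.rhs.varFinset) := by
  simp only [ERule.NE, unravelOptRule, sVars, tVars]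
  split <;> split <;> simp [Term.varFinset_mkU, seqOf]

theorem tVars_union_Zset_subset_inv_Xset
    (hNE : ∀ j ≤ ρ.conds.length, (unravelOptRule u ρ j).NE) {m : ℕ} (hm : m < ρ.conds.length) :
    ρ.tVars m ∪ ρ.Zset m ⊆ ρ.inv.Xset (ρ.conds.length - 1 - m) := by
  induction h : ρ.conds.length - 1 - m generalizing m with
  | zero =>
    have hlast := NE_unravelOptRule_iff.mp (hNE (m + 1) hm)
    rwa [if_neg (by omega), if_neg (by omega), Nat.add_sub_cancel, ← inv_Xset_zero] at hlast
  | succ d ih =>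
    have hstep := NE_unravelOptRule_iff.mp (hNE (m + 1) hm)
    rw [if_neg (by omega), if_pos (by omega), Nat.add_sub_cancel] at hstep
    have hd : ρ.conds.length - 1 - (m + 1) = d := by omega
    rw [← h, inv_Xset_eq_sVars_union (by omega), hd]
    exact hstep.trans (Finset.union_subset_union_right
      (Finset.subset_union_right.trans (ih (by omega) hd)))

theorem inv_det_of_forall_NE (hNE : ∀ j ≤ ρ.conds.length, (unravelOptRule u ρ j).NE) :
    ρ.inv.Det := by
  intro j hj x hx
  rw [inv_conds_length] at hj
  change x ∈ ρ.inv.sVars j at hx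
  rw [inv_sVars hj] at hx
  have h := tVars_union_Zset_subset_inv_Xset hNE (m := ρ.conds.length - 1 - j) (by omega)
    (Finset.mem_union_left _ hx)
  rwa [show ρ.conds.length - 1 - (ρ.conds.length - 1 - j) = j by omega] at h

theorem inv_type3_of_NE (hNE : (unravelOptRule u ρ 0).NE) : ρ.inv.Type3 := by
  rw [inv_type3_iff]
  have h := NE_unravelOptRule_iff.mp hNE
  rw [if_pos rfl] at h
  split_ifs at h with hk
  · refine h.trans (Finset.union_subset ?_ ?_)
    · exact (sVars_subset_condsVars hk).trans Finset.subset_union_right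
    · exact Finset.inter_subset_right.trans (Yset_subset_rhs_union_condsVars hk)
  · exact h.trans Finset.subset_union_left

theorem NE_unravelOptRule_of_inv (hD : ρ.inv.Det) (hT : ρ.inv.Type3) {j : ℕ}
    (hj : j ≤ ρ.conds.length) : (unravelOptRule u ρ j).NE := by
  rw [NE_unravelOptRule_iff]
  rcases j with _ | m
  · rw [if_pos rfl]
    split_ifs with hk
    · intro x hx
      have h := rhs_union_condsVars_subset_sVars_union_Yset (inv_type3_iff.mp hT hx)
      rw [Finset.mem_union] at h ⊢
      exact h.imp_right fun hY => Finset.mem_inter.mpr ⟨by rwa [Xset_zero], hY⟩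
    · intro x hx
      rcases Finset.mem_union.mp (inv_type3_iff.mp hT hx) with h | h
      · exact h
      · obtain ⟨i, hi, -⟩ := mem_condsVars.mp h
        omega
  · rw [if_neg m.succ_ne_zero, Nat.add_sub_cancel]
    refine (tVars_union_Zset_subset (by omega)).trans ?_
    rw [Yset_eq_inv_Xset hD (by omega)]
    split_ifs with hm
    · rw [inv_Xset_eq_sVars_union hm, ← Yset_eq_inv_Xset hD hm]
      intro x hx
      simp only [Finset.mem_inter, Finset.mem_union, Zset] at hx ⊢
      tauto
    · rw [show ρ.conds.length - 1 - m = 0 by omega, inv_Xset_zero]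
      exact Finset.inter_subset_right

theorem forall_NE_unravelOpt_iff :
    (∀ q ∈ unravelOpt u ρ, q.NE) ↔ ρ.inv.Det ∧ ρ.inv.Type3 := by
  simp only [unravelOpt_eq, List.forall_mem_map, List.mem_range, Nat.lt_succ_iff]
  exact ⟨fun h => ⟨inv_det_of_forall_NE h, inv_type3_of_NE (h 0 (Nat.zero_le _))⟩,
    fun ⟨hD, hT⟩ _ hj => NE_unravelOptRule_of_inv hD hT hj⟩

theorem unravelOptRule_inv (hdet : ρ.Det) (hdet' : ρ.inv.Det)
    (hu : ∀ i < ρ.conds.length, u' i = u (ρ.conds.length - 1 - i)) {j : ℕ}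
    (hj : j ≤ ρ.conds.length) :
    unravelOptRule u' ρ.inv j = (unravelOptRule u ρ (ρ.conds.length - j)).inv := by
  rw [unravelOptRule, unravelOptRule, show ∀ l r : Term α, (⟨l, r, []⟩ : ERule α).inv = ⟨r, l, []⟩
    from fun _ _ => rfl, inv_conds_length]
  congr 1
  · rcases Nat.eq_zero_or_pos j with rfl | hj0
    · simp [ERule.inv]
    · rw [if_neg hj0.ne', if_pos (by omega), hu _ (by omega), inv_conds_getD (by omega),
        inv_Zset hdet hdet' (by omega), show ρ.conds.length - 1 - (j - 1) = ρ.conds.length - j by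
          omega]
      rfl
  · by_cases hjk : j < ρ.conds.length
    · rw [if_pos hjk, if_neg (by omega), hu j hjk, inv_conds_getD hjk, inv_Zset hdet hdet' hjk,
        Nat.sub_sub, Nat.add_comm 1 j, ← Nat.sub_sub]
      rfl
    · rw [if_neg hjk, if_pos (by omega)]
      rfl

theorem unravelOpt_inv (hdet : ρ.Det) (hdet' : ρ.inv.Det)
    (hu : ∀ i < ρ.conds.length, u' i = u (ρ.conds.length - 1 - i)) :
    unravelOpt u' ρ.inv = ((unravelOpt u ρ).map ERule.inv).reverse := by
  apply List.ext_getElem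
  · simp [unravelOpt_eq]
  · intro j h₁ _
    simp only [unravelOpt_eq, List.getElem_reverse, List.getElem_map, List.getElem_range,
      List.length_map, List.length_range]
    exact unravelOptRule_inv hdet hdet' hu (by simpa [unravelOpt_eq] using h₁)

end Unraveling

section Systems

variable {α : Type u} {u u' : ERule α → ℕ → α} {R : Set (ERule α)}

theorem forall_mem_UoptSys {P : ERule α → Prop} :
    (∀ q ∈ UoptSys u R, P q) ↔ ∀ ρ ∈ R, ∀ q ∈ unravelOpt (u ρ) ρ, P q :=
  ⟨fun h ρ hρ q hq => h q ⟨ρ, hρ, hq⟩, fun h q ⟨ρ, hρ, hq⟩ => h ρ hρ q hq⟩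

theorem UoptSys_inv (hdet : ∀ ρ ∈ R, ρ.Det) (hdet' : ∀ ρ ∈ R, ρ.inv.Det)
    (hu : ∀ ρ ∈ R, ∀ i < ρ.conds.length, u' ρ.inv i = u ρ (ρ.conds.length - 1 - i)) :
    UoptSys u' (ERule.inv '' R) = ERule.inv '' UoptSys u R := by
  ext q
  simp only [UoptSys, Set.mem_image, Set.mem_ofPred_eq]
  constructor
  · rintro ⟨_, ⟨ρ, hρ, rfl⟩, hq⟩
    rw [unravelOpt_inv (hdet ρ hρ) (hdet' ρ hρ) (hu ρ hρ), List.mem_reverse, List.mem_map] at hq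
    obtain ⟨q', hq', rfl⟩ := hq
    exact ⟨q', ⟨ρ, hρ, hq'⟩, rfl⟩
  · rintro ⟨q', ⟨ρ, hρ, hq'⟩, rfl⟩
    refine ⟨ρ.inv, ⟨ρ, hρ, rfl⟩, ?_⟩
    rw [unravelOpt_inv (hdet ρ hρ) (hdet' ρ hρ) (hu ρ hρ), List.mem_reverse]
    exact List.mem_map_of_mem hq'

end Systems

/-- Let `R` be an eDCTRS, unraveled by `U_opt` with U symbols `u`,
and let the inverted system `(R)⁻¹` be unraveled with U symbols `u'` obtained by the
renaming `U^ρ_i = U^{(ρ)⁻¹}_{k-i+1}`. Then: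
(1) `R` is `U_opt`-NE iff `(R)⁻¹` is a 3-eDCTRS;
(2) if `R` is `U_opt`-NE, then (a) `U_opt((R)⁻¹) = (U_opt(R))⁻¹`,
(b) `R` is `U_opt`-LL iff `(R)⁻¹` is `U_opt`-RL, and
(c) `R` is `U_opt`-RL iff `(R)⁻¹` is `U_opt`-LL;
(3) `R` is non-LV iff `(R)⁻¹` is non-RV; (4) `R` is non-RV iff `(R)⁻¹` is non-LV. -/
theorem uopt_inv_duality {α : Type u} (R : Set (ERule α)) (u u' : ERule α → ℕ → α)
    (hdet : ∀ ρ ∈ R, ρ.Det)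
    (hu' : ∀ ρ ∈ R, ∀ i < ρ.conds.length,
      u' ρ.inv i = u ρ (ρ.conds.length - 1 - i)) :
    ((∀ ρ ∈ R, ∀ q ∈ unravelOpt (u ρ) ρ, q.NE) ↔
        (∀ ρ' ∈ ERule.inv '' R, ρ'.Det ∧ ρ'.Type3)) ∧
    ((∀ ρ ∈ R, ∀ q ∈ unravelOpt (u ρ) ρ, q.NE) →
        (UoptSys u' (ERule.inv '' R) = ERule.inv '' (UoptSys u R) ∧
          ((∀ ρ ∈ R, ∀ q ∈ unravelOpt (u ρ) ρ, q.LL) ↔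
            (∀ ρ' ∈ ERule.inv '' R, ∀ q ∈ unravelOpt (u' ρ') ρ', q.RL)) ∧
          ((∀ ρ ∈ R, ∀ q ∈ unravelOpt (u ρ) ρ, q.RL) ↔
            (∀ ρ' ∈ ERule.inv '' R, ∀ q ∈ unravelOpt (u' ρ') ρ', q.LL)))) ∧
    ((∀ ρ ∈ R, ρ.nonLV) ↔ (∀ ρ' ∈ ERule.inv '' R, ρ'.nonRV)) ∧
    ((∀ ρ ∈ R, ρ.nonRV) ↔ (∀ ρ' ∈ ERule.inv '' R, ρ'.nonLV)) := by
  have hNE_iff : (∀ ρ ∈ R, ∀ q ∈ unravelOpt (u ρ) ρ, q.NE) ↔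
      ∀ ρ' ∈ ERule.inv '' R, ρ'.Det ∧ ρ'.Type3 := by
    simp only [Set.forall_mem_image, forall_NE_unravelOpt_iff]
  refine ⟨hNE_iff, fun hNE => ?_, ?_, ?_⟩
  · have hsys := UoptSys_inv hdet (fun ρ hρ => (hNE_iff.mp hNE _ ⟨ρ, hρ, rfl⟩).1) hu'
    refine ⟨hsys, ?_, ?_⟩
    · rw [← forall_mem_UoptSys (P := ERule.LL), ← forall_mem_UoptSys (P := ERule.RL), hsys]
      simp only [Set.forall_mem_image, inv_RL]
    · rw [← forall_mem_UoptSys (P := ERule.RL), ← forall_mem_UoptSys (P := ERule.LL), hsys]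
      simp only [Set.forall_mem_image, inv_LL]
  · simp only [Set.forall_mem_image, inv_nonRV]
  · simp only [Set.forall_mem_image, inv_nonLV]
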